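/- Define F(x) = (Γ(1/2+x/2)/Γ(1/2-x/2))^2 · Γ(1-x)/Γ(1+x) and I(z) = (Γ(1-z/2)/Γ(1+z/2))^2 · Γ(1+z)/Γ(1-z). Then for all x ∈ [0, 2/38] and z ∈ [0, 1/38] with z ≤ x, one has F(x)·I(z) ≥ 1 - 4(ln 2)·x. -/

import Mathlib

noncomputable def F (v : ℝ) : ℝ :=
  (Real.Gamma (1 / 2 + v / 2) / Real.Gamma (1 / 2 - v / 2)) ^ 2 *
    (Real.Gamma (1 - v) / Real.Gamma (1 + v))

noncomputable def I (v : ℝ) : ℝ :=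
  (Real.Gamma (1 - v / 2) / Real.Gamma (1 + v / 2)) ^ 2 *
    (Real.Gamma (1 + v) / Real.Gamma (1 - v))

/-!
Legendre's duplication formula gives `F x = 4^(-x) Q(x)` and `I z = 4^z Q(z)` with `Q = gammaQuot`.
By Euler's limit formula, `Q(t)` is the limit of the partial products of `∏ⱼ (1 - dⱼ)` with
`dⱼ = u / ((j + 1/2 + u) (j + 1 - u))`, `u = t/2`, so `Q(t) ≥ 1 - ∑ⱼ dⱼ ≥ 1 - u ∑ⱼ 1 / ((j + 1/2) (j + 1))`.
The partial sums of the last series are `4 (H₂ₘ - Hₘ) ≤ 4 log 2`, whence `Q(t) ≥ 1 - 2 log 2 · t`.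
Writing `a = 2 log 2 · x` and `b = 2 log 2 · z`, what remains is
`e^(b - a) (1 - a) (1 - b) ≥ 1 - 2a` for `0 ≤ b ≤ a ≤ 1`.
-/

open Finset Filter Real Topology

theorem Finset.one_sub_sum_le_prod_one_sub {ι R : Type*} [CommRing R] [LinearOrder R]
    [IsStrictOrderedRing R] (s : Finset ι) {f : ι → R} (h0 : ∀ i ∈ s, 0 ≤ f i)
    (h1 : ∀ i ∈ s, f i ≤ 1) : 1 - ∑ i ∈ s, f i ≤ ∏ i ∈ s, (1 - f i) := by
  classical
  induction s using Finset.induction_on with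
  | empty => simp
  | insert i s hi ih =>
    rw [sum_insert hi, prod_insert hi]
    have hfi0 := h0 i (mem_insert_self i s)
    have hfi1 := h1 i (mem_insert_self i s)
    have ih := ih (fun j hj ↦ h0 j (mem_insert_of_mem hj))
      fun j hj ↦ h1 j (mem_insert_of_mem hj)
    have hs : 0 ≤ ∑ j ∈ s, f j := sum_nonneg fun j hj ↦ h0 j (mem_insert_of_mem hj)
    nlinarith [mul_le_mul_of_nonneg_left ih (sub_nonneg.2 hfi1)]

lemma sum_range_one_div_le_log_two (m : ℕ) :
    ∑ k ∈ range m, 1 / ((m + k + 1 : ℕ) : ℝ) ≤ log 2 := by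
  rcases m.eq_zero_or_pos with rfl | hm
  · simpa using (log_pos one_lt_two).le
  have hterm : ∀ k ∈ range m, 1 / ((m + k + 1 : ℕ) : ℝ) ≤
      log ((m + (k + 1) : ℕ) : ℝ) - log ((m + k : ℕ) : ℝ) := fun k _ ↦ by
    have hk : (0 : ℝ) < (m + k : ℕ) := by positivity
    have hk' : (0 : ℝ) < (m + (k + 1) : ℕ) := by positivity
    have h := one_sub_inv_le_log_of_pos (div_pos hk' hk)
    rw [log_div hk'.ne' hk.ne', inv_div] at h
    convert h using 1
    push_cast
    field_simp
    ring
  calc ∑ k ∈ range m, 1 / ((m + k + 1 : ℕ) : ℝ)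
      ≤ ∑ k ∈ range m, (log ((m + (k + 1) : ℕ) : ℝ) - log ((m + k : ℕ) : ℝ)) :=
        sum_le_sum hterm
    _ = log 2 := by
      rw [sum_range_sub (fun k ↦ log ((m + k : ℕ) : ℝ)),
        ← log_div (by positivity) (by positivity)]
      congr 1
      push_cast
      field_simp
      ring

lemma sum_range_one_div_mul_eq (m : ℕ) :
    ∑ j ∈ range m, 1 / ((j + 1 / 2 : ℝ) * (j + 1)) =
      4 * ∑ k ∈ range m, 1 / ((m + k + 1 : ℕ) : ℝ) := by
  induction m with
  | zero => simp
  | succ m ih =>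
    have hshift := (sum_range_succ' (fun k ↦ 1 / ((m + k + 1 : ℕ) : ℝ)) m).symm.trans
      (sum_range_succ (fun k ↦ 1 / ((m + k + 1 : ℕ) : ℝ)) m)
    rw [sum_range_succ, ih, sum_range_succ]
    simp only [show ∀ k, m + 1 + k + 1 = m + (k + 1) + 1 from fun k ↦ by ring]
    rw [eq_sub_of_add_eq hshift]
    push_cast
    field_simp
    ring

lemma sum_range_one_div_mul_le (m : ℕ) :
    ∑ j ∈ range m, 1 / ((j + 1 / 2 : ℝ) * (j + 1)) ≤ 4 * log 2 := by
  rw [sum_range_one_div_mul_eq]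
  linarith [sum_range_one_div_le_log_two m]

lemma one_sub_mul_log_two_le_prod_range {u : ℝ} (hu0 : 0 ≤ u) (hu : u ≤ 1 / 2) (m : ℕ) :
    1 - 4 * log 2 * u ≤
      ∏ j ∈ range m, ((1 / 2 - u + j) * (1 + u + j)) / ((1 / 2 + u + j) * (1 - u + j)) := by
  have hden : ∀ j : ℕ, ((j : ℝ) + 1 / 2) * (j + 1) ≤ (1 / 2 + u + j) * (1 - u + j) :=
    fun j ↦ by nlinarith
  have hpos : ∀ j : ℕ, (0 : ℝ) < ((j : ℝ) + 1 / 2) * (j + 1) := fun j ↦ by positivity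
  set d : ℕ → ℝ := fun j ↦ u / ((1 / 2 + u + j) * (1 - u + j))
  have hfactor : ∀ j : ℕ, ((1 / 2 - u + j) * (1 + u + j)) / ((1 / 2 + u + j) * (1 - u + j)) =
      1 - d j := fun j ↦ by
    have : (0 : ℝ) < 1 - u + j := by linarith [(j.cast_nonneg : (0 : ℝ) ≤ j)]
    have : (0 : ℝ) < 1 / 2 + u + j := by positivity
    simp only [d]
    field_simp
    ring
  have hd : ∀ j : ℕ, d j ≤ u * (1 / ((j + 1 / 2) * (j + 1))) := fun j ↦ by
    rw [mul_one_div]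
    exact div_le_div_of_nonneg_left hu0 (hpos j) (hden j)
  have hd0 : ∀ j : ℕ, 0 ≤ d j := fun j ↦ div_nonneg hu0 ((hpos j).trans_le (hden j)).le
  have hd1 : ∀ j : ℕ, d j ≤ 1 := fun j ↦ (hd j).trans <| by
    rw [mul_one_div, div_le_one (hpos j)]
    nlinarith [(j.cast_nonneg : (0 : ℝ) ≤ j)]
  have hsum : ∑ j ∈ range m, d j ≤ 4 * log 2 * u := calc
    ∑ j ∈ range m, d j ≤ ∑ j ∈ range m, u * (1 / ((j + 1 / 2) * (j + 1))) :=
      sum_le_sum fun j _ ↦ hd j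
    _ = u * ∑ j ∈ range m, 1 / ((j + 1 / 2 : ℝ) * (j + 1)) := (mul_sum ..).symm
    _ ≤ u * (4 * log 2) := mul_le_mul_of_nonneg_left (sum_range_one_div_mul_le m) hu0
    _ = 4 * log 2 * u := mul_comm ..
  simp only [hfactor]
  linarith [one_sub_sum_le_prod_one_sub (range m) (fun j _ ↦ hd0 j) fun j _ ↦ hd1 j]

lemma tendsto_prod_range_Gamma_mul_div {a b c d : ℝ} (h : a + b = c + d) (hc : Gamma c ≠ 0)
    (hd : Gamma d ≠ 0) :
    Tendsto (fun n : ℕ ↦ ∏ j ∈ range (n + 1), ((c + j) * (d + j)) / ((a + j) * (b + j)))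
      atTop (𝓝 (Gamma a * Gamma b / (Gamma c * Gamma d))) := by
  have hlim := ((GammaSeq_tendsto_Gamma a).mul (GammaSeq_tendsto_Gamma b)).div
    ((GammaSeq_tendsto_Gamma c).mul (GammaSeq_tendsto_Gamma d)) (mul_ne_zero hc hd)
  refine hlim.congr' ((eventually_ge_atTop 1).mono fun n hn ↦ ?_)
  have hn : (0 : ℝ) < n := by exact_mod_cast hn
  have hpow : (n : ℝ) ^ a * n ^ b = n ^ c * n ^ d := by
    rw [← rpow_add hn, ← rpow_add hn, h]
  simp only [Pi.div_apply, GammaSeq, prod_div_distrib, prod_mul_distrib, div_mul_div_comm]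
  rw [mul_mul_mul_comm, mul_mul_mul_comm (_ ^ c), hpow, div_div_div_cancel_left']
  have := n.factorial_pos
  positivity

noncomputable def gammaQuot (t : ℝ) : ℝ :=
  Gamma (1 / 2 + t / 2) * Gamma (1 - t / 2) / (Gamma (1 / 2 - t / 2) * Gamma (1 + t / 2))

lemma one_sub_le_gammaQuot {t : ℝ} (h0 : 0 ≤ t) (h1 : t < 1) :
    1 - 2 * log 2 * t ≤ gammaQuot t := by
  have hlim := tendsto_prod_range_Gamma_mul_div (a := 1 / 2 + t / 2) (b := 1 - t / 2)
    (c := 1 / 2 - t / 2) (d := 1 + t / 2) (by ring) (Gamma_pos_of_pos (by linarith)).ne'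
    (Gamma_pos_of_pos (by linarith)).ne'
  refine ge_of_tendsto hlim (Eventually.of_forall fun n ↦ ?_)
  calc 1 - 2 * log 2 * t = 1 - 4 * log 2 * (t / 2) := by ring
    _ ≤ _ := one_sub_mul_log_two_le_prod_range (by linarith) (by linarith) (n + 1)

lemma Gamma_one_add_div_Gamma_one_sub (w : ℝ) :
    Gamma (1 + w) / Gamma (1 - w) =
      4 ^ w * (Gamma (1 / 2 + w / 2) * Gamma (1 + w / 2) /
        (Gamma (1 / 2 - w / 2) * Gamma (1 - w / 2))) := by
  have hdup : ∀ v : ℝ, Gamma (1 / 2 + v / 2) * Gamma (1 + v / 2) =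
      Gamma (1 + v) * 2 ^ (-v) * √π := fun v ↦ by
    convert Gamma_mul_Gamma_add_half (1 / 2 + v / 2) using 3 <;> ring_nf
  have hdup' := hdup (-w)
  simp only [neg_div, ← sub_eq_add_neg, neg_neg] at hdup'
  have hpow : (4 : ℝ) ^ w * (2 ^ (-w) / 2 ^ w) = 1 := by
    rw [← rpow_sub two_pos, show (4 : ℝ) = 2 ^ (2 : ℝ) by norm_num, ← rpow_mul zero_le_two,
      ← rpow_add two_pos]
    ring_nf
    exact rpow_zero 2
  rw [hdup, hdup', mul_div_mul_right _ _ (by positivity), mul_div_mul_comm, mul_left_comm, hpow,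
    mul_one]

lemma F_eq_rpow_mul_gammaQuot {x : ℝ} (hx : |x| < 1) : F x = 4 ^ (-x) * gammaQuot x := by
  obtain ⟨hx₁, hx₂⟩ := abs_lt.1 hx
  have hA : Gamma (1 / 2 + x / 2) ≠ 0 := (Gamma_pos_of_pos (by linarith)).ne'
  have hC : Gamma (1 / 2 - x / 2) ≠ 0 := (Gamma_pos_of_pos (by linarith)).ne'
  have hD : Gamma (1 + x / 2) ≠ 0 := (Gamma_pos_of_pos (by linarith)).ne'
  have h := Gamma_one_add_div_Gamma_one_sub (-x)
  simp only [neg_div, ← sub_eq_add_neg, sub_neg_eq_add] at h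
  rw [F, h, gammaQuot]
  field_simp

lemma I_eq_rpow_mul_gammaQuot {z : ℝ} (hz : |z| < 2) : I z = 4 ^ z * gammaQuot z := by
  obtain ⟨hz₁, hz₂⟩ := abs_lt.1 hz
  have hB : Gamma (1 - z / 2) ≠ 0 := (Gamma_pos_of_pos (by linarith)).ne'
  have hD : Gamma (1 + z / 2) ≠ 0 := (Gamma_pos_of_pos (by linarith)).ne'
  rw [I, Gamma_one_add_div_Gamma_one_sub, gammaQuot]
  field_simp

lemma one_sub_two_mul_le_exp_sub_mul {a b : ℝ} (hb : 0 ≤ b) (hba : b ≤ a) (ha : a ≤ 1) :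
    1 - 2 * a ≤ exp (b - a) * ((1 - a) * (1 - b)) := calc
  1 - 2 * a ≤ (1 - a) ^ 2 + (a - b) * (1 - a) * b := by
    nlinarith [mul_nonneg (mul_nonneg (sub_nonneg.2 hba) (sub_nonneg.2 ha)) hb]
  _ = (b - a + 1) * ((1 - a) * (1 - b)) := by ring
  _ ≤ exp (b - a) * ((1 - a) * (1 - b)) :=
    mul_le_mul_of_nonneg_right (add_one_le_exp _) (by nlinarith)

theorem F_mul_I_lower_bound {x z : ℝ} (hx : x ∈ Set.Icc (0 : ℝ) (2 / 38))
    (hz : z ∈ Set.Icc (0 : ℝ) (1 / 38)) (hzx : z ≤ x) :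
    1 - 4 * Real.log 2 * x ≤ F x * I z := by
  obtain ⟨hx₀, hx₁⟩ := hx
  obtain ⟨hz₀, hz₁⟩ := hz
  have hFI : F x * I z = exp (2 * log 2 * z - 2 * log 2 * x) * (gammaQuot x * gammaQuot z) := by
    rw [F_eq_rpow_mul_gammaQuot (abs_lt.2 ⟨by linarith, by linarith⟩),
      I_eq_rpow_mul_gammaQuot (abs_lt.2 ⟨by linarith, by linarith⟩), mul_mul_mul_comm,
      ← rpow_add four_pos, rpow_def_of_pos four_pos, show (4 : ℝ) = 2 ^ 2 by norm_num, log_pow]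
    ring_nf
  have hGx := one_sub_le_gammaQuot hx₀ (by linarith)
  have hGz := one_sub_le_gammaQuot hz₀ (by linarith)
  have ha : 2 * log 2 * x ≤ 1 := by nlinarith [log_two_lt_d9]
  have hb : 2 * log 2 * z ≤ 2 * log 2 * x := by gcongr
  calc 1 - 4 * log 2 * x = 1 - 2 * (2 * log 2 * x) := by ring
    _ ≤ exp (2 * log 2 * z - 2 * log 2 * x) * ((1 - 2 * log 2 * x) * (1 - 2 * log 2 * z)) :=
      one_sub_two_mul_le_exp_sub_mul (by positivity) hb ha
    _ ≤ exp (2 * log 2 * z - 2 * log 2 * x) * (gammaQuot x * gammaQuot z) := by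
      gcongr
      · linarith
      · linarith
    _ = F x * I z := hFI.symm
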